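/- arXiv:2208.03355 — 2 statements merged into one kernel-verified Lean document; each statement's English description precedes it below -/
import Mathlib

section
/- If a blockchain tree has two or more distinct infinite branches, then any block lying on one infinite branch but not on the shared trunk of two infinite branches is neither accepted nor rejected. -/
/-- `c` is a child of `b` in the blockchain tree given by `parent`. -/
def ChildOf {B : Type} (parent : B → Option B) (c b : B) : Prop := parent c = some b

/-- `b` is a (strict) ancestor of `c`. -/
def Anc {B : Type} (parent : B → Option B) (b c : B) : Prop :=
  Relation.TransGen (ChildOf parent) c b

/-- `b` is an ancestor of `c` or equal to it. -/
def AncOrEq {B : Type} (parent : B → Option B) (b c : B) : Prop :=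
  Relation.ReflTransGen (ChildOf parent) c b

/-- An infinite branch: a path from the root following the child relation. -/
def InfBranch {B : Type} (parent : B → Option B) (root : B) (f : ℕ → B) : Prop :=
  f 0 = root ∧ ∀ n, parent (f (n + 1)) = some (f n)

/-- A block is accepted if it is an ancestor of (or equal to) all but finitely many blocks. -/
def Accepted {B : Type} (parent : B → Option B) (b : B) : Prop :=
  {c | ¬ AncOrEq parent b c}.Finite

/-- A block is rejected if it is an ancestor of only finitely many blocks. -/
def Rejected {B : Type} (parent : B → Option B) (b : B) : Prop :=
  {c | Anc parent b c}.Finite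

/-- Globally decisive: every block is accepted or rejected but not both. -/
def GloballyDecisive {B : Type} (parent : B → Option B) : Prop :=
  ∀ b, (Accepted parent b ∨ Rejected parent b) ∧ ¬ (Accepted parent b ∧ Rejected parent b)

namespace InfBranch

variable {B : Type} {parent : B → Option B} {root : B} {f : ℕ → B}

theorem apply_succ_ne_zero (hf : InfBranch parent root f) (hroot : parent root = none) (n : ℕ) :
    f (n + 1) ≠ f 0 := by
  intro h
  have hparent := hf.2 n
  rw [h, hf.1, hroot] at hparent
  exact absurd hparent (Option.some_ne_none _).symm

theorem injective (hf : InfBranch parent root f) (hroot : parent root = none) :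
    Function.Injective f := by
  intro i
  induction i with
  | zero =>
    rintro (_ | j) h
    · rfl
    · exact absurd h.symm (hf.apply_succ_ne_zero hroot j)
  | succ i ih =>
    rintro (_ | j) h
    · exact absurd h (hf.apply_succ_ne_zero hroot i)
    · have hparents := (hf.2 i).symm.trans (h ▸ hf.2 j)
      rw [ih (Option.some.inj hparents)]

theorem mem_range_of_ancOrEq (hf : InfBranch parent root f) (hroot : parent root = none)
    {c : B} {n : ℕ} (hc : AncOrEq parent c (f n)) : c ∈ Set.range f := by
  induction hc with
  | refl => exact ⟨n, rfl⟩
  | tail _ hchild ih =>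
    obtain ⟨_ | m, rfl⟩ := ih
    · rw [ChildOf, hf.1, hroot] at hchild
      exact absurd hchild (Option.some_ne_none _).symm
    · rw [ChildOf, hf.2 m] at hchild
      exact ⟨m, Option.some.inj hchild⟩

theorem anc_of_lt (hf : InfBranch parent root f) {k n : ℕ} (hkn : k < n) :
    Anc parent (f k) (f n) := by
  induction n, hkn using Nat.le_induction with
  | base => exact Relation.TransGen.single (hf.2 k)
  | succ n _ ih => exact Relation.TransGen.head (hf.2 n) ih

theorem not_accepted (hf : InfBranch parent root f) (hroot : parent root = none)
    {b : B} (hb : b ∉ Set.range f) : ¬ Accepted parent b :=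
  Set.infinite_of_injective_forall_mem (hf.injective hroot)
    fun _ hanc => hb (hf.mem_range_of_ancOrEq hroot hanc)

theorem not_rejected (hf : InfBranch parent root f) (hroot : parent root = none) (k : ℕ) :
    ¬ Rejected parent (f k) :=
  Set.infinite_of_injective_forall_mem ((hf.injective hroot).comp (add_right_injective (k + 1)))
    fun n => hf.anc_of_lt (by omega : k < k + 1 + n)

end InfBranch

theorem stmt_3_general {B : Type} (root : B) (parent : B → Option B)
    (hroot : parent root = none)
    (f g : ℕ → B) (hf : InfBranch parent root f) (hg : InfBranch parent root g)
    (b : B) (k : ℕ) (hb : f k = b) (hnotTrunk : b ∉ Set.range g) :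
    ¬ Accepted parent b ∧ ¬ Rejected parent b := by
  subst hb
  exact ⟨hg.not_accepted hroot hnotTrunk, hf.not_rejected hroot k⟩

/-- If there are two distinct infinite branches, then any block lying on one
of them but not on their shared trunk (i.e. not on the other branch) is neither accepted
nor rejected. -/
theorem stmt_3 {B : Type} (root : B) (parent : B → Option B)
    (hroot : parent root = none)
    (hreach : ∀ b, AncOrEq parent root b)
    (f g : ℕ → B) (hf : InfBranch parent root f) (hg : InfBranch parent root g)
    (hne : f ≠ g)
    (b : B) (k : ℕ) (hb : f k = b) (hnotTrunk : b ∉ Set.range g) :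
    ¬ Accepted parent b ∧ ¬ Rejected parent b :=
  stmt_3_general root parent hroot f g hf hg b k hb hnotTrunk
end

section
/- If in the pool graph there is a directed path from pool P1 to pool P2, then every miner in P1 has infinitely many journeys to every miner in P2. -/
/-- A journey from `m` to `m'` starting after round `r`: a nonempty temporal path of links
occurring in strictly increasing rounds, all after `r`. -/
def Journey {M : Type} (link : ℕ → M → M → Prop) (r : ℕ) (m m' : M) : Prop :=
  ∃ (k : ℕ) (f : ℕ → M) (t : ℕ → ℕ),
    0 < k ∧ f 0 = m ∧ f k = m' ∧
    (∀ i, i < k → link (t i) (f i) (f (i + 1))) ∧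
    (∀ i, i < k → r < t i) ∧
    (∀ i j, i < j → j < k → t i < t j)

/-- `m` has infinitely many journeys to `m'`: journeys starting arbitrarily late. -/
def InfJ {M : Type} (link : ℕ → M → M → Prop) (m m' : M) : Prop :=
  ∀ r : ℕ, Journey link r m m'

/-- The pool relation: equal, or infinitely many journeys in both directions. -/
def PoolRel {M : Type} (link : ℕ → M → M → Prop) (m m' : M) : Prop :=
  m = m' ∨ (InfJ link m m' ∧ InfJ link m' m)

/-- A mining pool: an equivalence class of the pool relation. -/
def IsPool {M : Type} (link : ℕ → M → M → Prop) (P : Set M) : Prop :=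
  ∃ m : M, P = {m' | PoolRel link m m'}

/-- Pool-graph edge: infinitely many rounds contain a link from `P1` to `P2`. -/
def PoolEdge {M : Type} (link : ℕ → M → M → Prop) (P1 P2 : Set M) : Prop :=
  ∀ r : ℕ, ∃ ρ, r < ρ ∧ ∃ m1 ∈ P1, ∃ m2 ∈ P2, link ρ m1 m2

/-- Edge of the pool graph (between pools). -/
def PGEdge {M : Type} (link : ℕ → M → M → Prop) (P1 P2 : Set M) : Prop :=
  IsPool link P1 ∧ IsPool link P2 ∧ PoolEdge link P1 P2

/-- A source pool: a pool with only finitely many journeys from outside miners into it,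
i.e. no outside miner has infinitely many journeys to a pool member. -/
def SourcePool {M : Type} (link : ℕ → M → M → Prop) (P : Set M) : Prop :=
  IsPool link P ∧ ∀ m, m ∉ P → ∀ m' ∈ P, ¬ InfJ link m m'

section Journeys

variable {M : Type} {link : ℕ → M → M → Prop}

/-- The second journey may start after the last round of the first, so the two concatenate. -/
theorem Journey.trans {r : ℕ} {m m' m'' : M} (h₁ : Journey link r m m')
    (h₂ : ∀ s, Journey link s m' m'') : Journey link r m m'' := by
  obtain ⟨k₁, f₁, t₁, hk₁, hf₁0, hf₁k, hl₁, hr₁, ht₁⟩ := h₁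
  obtain ⟨k₂, f₂, t₂, hk₂, hf₂0, hf₂k, hl₂, hr₂, ht₂⟩ := h₂ (t₁ (k₁ - 1))
  have ht₁_le_last : ∀ i < k₁, t₁ i ≤ t₁ (k₁ - 1) := fun i hi => by
    rcases Nat.lt_or_ge i (k₁ - 1) with h | h
    · exact (ht₁ i _ h (by omega)).le
    · rw [show i = k₁ - 1 by omega]
  refine ⟨k₁ + k₂, fun i => if i < k₁ then f₁ i else f₂ (i - k₁),
    fun i => if i < k₁ then t₁ i else t₂ (i - k₁), by omega, by simp [hk₁, hf₁0],
    by simp [hf₂k], fun i hi => ?_, fun i hi => ?_, fun i j hij hj => ?_⟩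
  · by_cases hi₁ : i + 1 < k₁
    · simpa [show i < k₁ by omega, hi₁] using hl₁ i (by omega)
    by_cases hi₀ : i < k₁
    · simpa [hi₀, hi₁, show i + 1 - k₁ = 0 by omega, hf₂0, ← hf₁k,
        show k₁ = i + 1 by omega] using hl₁ i hi₀
    · simpa [hi₀, hi₁, show i + 1 - k₁ = i - k₁ + 1 by omega] using hl₂ (i - k₁) (by omega)
  · by_cases hi₁ : i < k₁
    · simpa [hi₁] using hr₁ i hi₁
    · have := hr₂ (i - k₁) (by omega)
      have := hr₁ (k₁ - 1) (by omega)
      simp only [hi₁, if_false]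
      omega
  · by_cases hj₁ : j < k₁
    · simpa [hj₁, show i < k₁ by omega] using ht₁ i j hij hj₁
    by_cases hi₁ : i < k₁
    · have := ht₁_le_last i hi₁
      have := hr₂ (j - k₁) (by omega)
      simp only [hi₁, hj₁, if_true, if_false]
      omega
    · simpa [hi₁, hj₁] using ht₂ (i - k₁) (j - k₁) (by omega) (by omega)

theorem InfJ.trans {m m' m'' : M} (h₁ : InfJ link m m') (h₂ : InfJ link m' m'') :
    InfJ link m m'' :=
  fun r => (h₁ r).trans h₂

theorem infJ_of_frequently_link {a b : M} (h : ∃ᶠ ρ in Filter.atTop, link ρ a b) :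
    InfJ link a b := fun r => by
  obtain ⟨ρ, hρ, hl⟩ := Filter.frequently_atTop'.1 h r
  exact ⟨1, fun i => if i = 0 then a else b, fun _ => ρ, one_pos, rfl, rfl,
    fun i hi => by simpa [show i = 0 by omega] using hl, fun _ _ => hρ, by omega⟩

theorem IsPool.eq_or_infJ {P : Set M} (hP : IsPool link P) {a b : M} (ha : a ∈ P)
    (hb : b ∈ P) : a = b ∨ InfJ link a b := by
  obtain ⟨m₀, rfl⟩ := hP
  rcases ha with rfl | ⟨-, hba⟩ <;> rcases hb with rfl | ⟨hb, -⟩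
  exacts [.inl rfl, .inr hb, .inr hba, .inr (hba.trans hb)]

theorem IsPool.infJ_of_infJ_left {P : Set M} (hP : IsPool link P) {m a x : M} (hm : m ∈ P)
    (ha : a ∈ P) (h : InfJ link a x) : InfJ link m x :=
  (hP.eq_or_infJ hm ha).elim (· ▸ h) (·.trans h)

theorem IsPool.infJ_of_infJ_right {P : Set M} (hP : IsPool link P) {m b x : M} (hb : b ∈ P)
    (hm : m ∈ P) (h : InfJ link x b) : InfJ link x m :=
  (hP.eq_or_infJ hb hm).elim (· ▸ h) h.trans

theorem IsPool.nonempty {P : Set M} (hP : IsPool link P) : P.Nonempty := by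
  obtain ⟨m₀, rfl⟩ := hP
  exact ⟨m₀, .inl rfl⟩

end Journeys

/-- With finitely many miners, some fixed pair carries links in infinitely many rounds. -/
theorem PoolEdge.exists_infJ {M : Type} [Finite M] {link : ℕ → M → M → Prop} {P₁ P₂ : Set M}
    (h : PoolEdge link P₁ P₂) : ∃ a ∈ P₁, ∃ b ∈ P₂, InfJ link a b := by
  have hpair : ∃ᶠ ρ in Filter.atTop, ∃ p : M × M, p.1 ∈ P₁ ∧ p.2 ∈ P₂ ∧ link ρ p.1 p.2 :=
    (Filter.frequently_atTop'.2 h).mono fun _ ⟨a, ha, b, hb, hl⟩ => ⟨(a, b), ha, hb, hl⟩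
  obtain ⟨⟨a, b⟩, hab⟩ := Filter.frequently_exists.1 hpair
  obtain ⟨_, ha, hb, -⟩ := hab.exists
  exact ⟨a, ha, b, hb, infJ_of_frequently_link (hab.mono fun _ h => h.2.2)⟩

theorem PGEdge.infJ {M : Type} [Finite M] {link : ℕ → M → M → Prop} {P₁ P₂ : Set M}
    (h : PGEdge link P₁ P₂) : ∀ m₁ ∈ P₁, ∀ m₂ ∈ P₂, InfJ link m₁ m₂ := by
  obtain ⟨hP₁, hP₂, hedge⟩ := h
  obtain ⟨a, ha, b, hb, hab⟩ := hedge.exists_infJ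
  exact fun m₁ hm₁ m₂ hm₂ => hP₂.infJ_of_infJ_right hb hm₂ (hP₁.infJ_of_infJ_left hm₁ ha hab)

theorem stmt_9_general {M : Type} [Fintype M] (link : ℕ → M → M → Prop)
    (P1 P2 : Set M)
    (hpath : Relation.TransGen (PGEdge link) P1 P2) :
    ∀ m1 ∈ P1, ∀ m2 ∈ P2, InfJ link m1 m2 := by
  induction hpath with
  | single hedge => exact hedge.infJ
  | tail _ hedge ih =>
    obtain ⟨a, ha⟩ := hedge.1.nonempty
    exact fun m₁ hm₁ m₂ hm₂ => (ih m₁ hm₁ a ha).trans (hedge.infJ a ha m₂ hm₂)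

/-- If the pool graph has a directed path from pool `P1` to pool `P2`, then
every miner of `P1` has infinitely many journeys to every miner of `P2`. -/
theorem stmt_9 {M : Type} [Fintype M] (link : ℕ → M → M → Prop)
    (P1 P2 : Set M) (h1 : IsPool link P1) (h2 : IsPool link P2)
    (hpath : Relation.TransGen (PGEdge link) P1 P2) :
    ∀ m1 ∈ P1, ∀ m2 ∈ P2, InfJ link m1 m2 :=
  stmt_9_general link P1 P2 hpath
end
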